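/- arXiv:math/9803038 — 7 statements merged into one kernel-verified Lean document; each statement's English description precedes it below -/
import Mathlib

section
/- If V and W are partially algebraic vector fields on ℝⁿ × ℝᵐ, then their Lie bracket [V,W] is again a partially algebraic vector field. -/
/-- The Lie bracket of two vector fields on a normed space:
`[V, W] p = DW(p)(V p) − DV(p)(W p)`. -/
noncomputable def vBracket {E : Type*} [NormedAddCommGroup E] [NormedSpace ℝ E]
    (V W : E → E) : E → E :=
  fun p => fderiv ℝ W p (V p) - fderiv ℝ V p (W p)

/-- A vector field `V` on `ℝⁿ × ℝᵐ` is partially algebraic if it is `C^∞` and there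
is `k : ℕ` such that each of its `n + m` real component functions is, for fixed `x`,
a polynomial of degree at most `k` in `u = (u₁, …, u_m)`, with coefficients depending
smoothly on `x`.  The polynomial is recorded as an element of
`MvPolynomial (Fin m) ((Fin n → ℝ) → ℝ)` with smooth coefficients, evaluated at `u`
after evaluating each coefficient at `x`. -/
def IsPartiallyAlgebraic (n m : ℕ)
    (V : (Fin n → ℝ) × (Fin m → ℝ) → (Fin n → ℝ) × (Fin m → ℝ)) : Prop :=
  ContDiff ℝ (⊤ : ℕ∞) V ∧
  ∃ k : ℕ, ∀ c : Fin n ⊕ Fin m,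
    ∃ P : MvPolynomial (Fin m) ((Fin n → ℝ) → ℝ),
      P.totalDegree ≤ k ∧
      (∀ I : Fin m →₀ ℕ, ContDiff ℝ (⊤ : ℕ∞) (MvPolynomial.coeff I P)) ∧
      ∀ (x : Fin n → ℝ) (u : Fin m → ℝ),
        Sum.elim (V (x, u)).1 (V (x, u)).2 c =
          MvPolynomial.eval₂ (Pi.evalRingHom (fun _ : Fin n → ℝ => ℝ) x) u P

/-- Auxiliary inductive predicate: partially algebraic scalar functions. -/
inductive PA (n m : ℕ) : ((Fin n → ℝ) × (Fin m → ℝ) → ℝ) → Prop where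
  | base : ∀ g : (Fin n → ℝ) → ℝ, ContDiff ℝ (⊤ : ℕ∞) g → PA n m (fun p => g p.1)
  | coord : ∀ j : Fin m, PA n m (fun p => p.2 j)
  | add : ∀ {f g}, PA n m f → PA n m g → PA n m (fun p => f p + g p)
  | mul : ∀ {f g}, PA n m f → PA n m g → PA n m (fun p => f p * g p)

lemma PA.contDiff {n m : ℕ} {f} (h : PA n m f) : ContDiff ℝ (⊤ : ℕ∞) f := by
  induction h with
  | base g hg => exact hg.comp contDiff_fst
  | coord j => exact ((ContinuousLinearMap.proj j : (Fin m → ℝ) →L[ℝ] ℝ)).contDiff.comp contDiff_snd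
  | add _ _ ihf ihg => exact ihf.add ihg
  | mul _ _ ihf ihg => exact ihf.mul ihg

lemma PA.sum {n m : ℕ} {ι : Type*} (s : Finset ι) (F : ι → ((Fin n → ℝ) × (Fin m → ℝ) → ℝ))
    (h : ∀ i ∈ s, PA n m (F i)) : PA n m (fun p => ∑ i ∈ s, F i p) := by
  classical
  induction s using Finset.cons_induction with
  | empty => simpa using PA.base (fun _ => (0:ℝ)) contDiff_const
  | cons a s ha ih =>
      simp only [Finset.sum_cons]
      exact PA.add (h a (Finset.mem_cons_self a s)) (ih fun i hi => h i (Finset.mem_cons_of_mem hi))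

lemma PA.pow {n m : ℕ} {f} (h : PA n m f) (k : ℕ) : PA n m (fun p => f p ^ k) := by
  induction k with
  | zero => simpa using PA.base (fun _ => (1:ℝ)) contDiff_const
  | succ k ih => simp only [pow_succ]; exact PA.mul ih h

lemma PA.prod {n m : ℕ} {ι : Type*} (s : Finset ι) (F : ι → ((Fin n → ℝ) × (Fin m → ℝ) → ℝ))
    (h : ∀ i ∈ s, PA n m (F i)) : PA n m (fun p => ∏ i ∈ s, F i p) := by
  classical
  induction s using Finset.cons_induction with
  | empty => simpa using PA.base (fun _ => (1:ℝ)) contDiff_const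
  | cons a s ha ih =>
      simp only [Finset.prod_cons]
      exact PA.mul (h a (Finset.mem_cons_self a s)) (ih fun i hi => h i (Finset.mem_cons_of_mem hi))

lemma PA.sub {n m : ℕ} {f g} (hf : PA n m f) (hg : PA n m g) :
    PA n m (fun p => f p - g p) := by
  have key : (fun p : (Fin n → ℝ) × (Fin m → ℝ) => f p - g p) =
      fun p => f p + (fun _ : Fin n → ℝ => (-1:ℝ)) p.1 * g p := by
    funext p; ring
  rw [key]
  exact PA.add hf (PA.mul (PA.base (fun _ => (-1:ℝ)) contDiff_const) hg)

lemma PA.ofPoly {n m : ℕ} (P : MvPolynomial (Fin m) ((Fin n → ℝ) → ℝ))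
    (hc : ∀ I, ContDiff ℝ (⊤ : ℕ∞) (MvPolynomial.coeff I P)) :
    PA n m (fun p => MvPolynomial.eval₂ (Pi.evalRingHom (fun _ : Fin n → ℝ => ℝ) p.1) p.2 P) := by
  have key : (fun p : (Fin n → ℝ) × (Fin m → ℝ) =>
      MvPolynomial.eval₂ (Pi.evalRingHom (fun _ : Fin n → ℝ => ℝ) p.1) p.2 P) =
      fun p => ∑ d ∈ P.support, (MvPolynomial.coeff d P p.1) * ∏ i ∈ d.support, p.2 i ^ d i := by
    funext p
    rw [MvPolynomial.eval₂_eq]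
    rfl
  rw [key]
  exact PA.sum _ _ fun d _ =>
    PA.mul (PA.base _ (hc d)) (PA.prod _ _ fun i _ => PA.pow (PA.coord i) (d i))

lemma PA.toPoly {n m : ℕ} {f} (h : PA n m f) :
    ∃ P : MvPolynomial (Fin m) ((Fin n → ℝ) → ℝ),
      (∀ I, ContDiff ℝ (⊤ : ℕ∞) (MvPolynomial.coeff I P)) ∧
      ∀ x u, f (x, u) = MvPolynomial.eval₂ (Pi.evalRingHom (fun _ : Fin n → ℝ => ℝ) x) u P := by
  induction h with
  | base g hg =>
      refine ⟨MvPolynomial.C g, fun I => ?_, fun x u => ?_⟩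
      · rw [MvPolynomial.coeff_C]
        split_ifs
        · exact hg
        · exact contDiff_const (c := (0:ℝ))
      · simp [MvPolynomial.eval₂_C]
  | coord j =>
      refine ⟨MvPolynomial.X j, fun I => ?_, fun x u => ?_⟩
      · rw [MvPolynomial.coeff_X']
        split_ifs
        · exact contDiff_const (c := (1:ℝ))
        · exact contDiff_const (c := (0:ℝ))
      · simp [MvPolynomial.eval₂_X]
  | add _ _ ihf ihg =>
      obtain ⟨P, hP, heP⟩ := ihf
      obtain ⟨Q, hQ, heQ⟩ := ihg
      refine ⟨P + Q, fun I => ?_, fun x u => ?_⟩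
      · rw [MvPolynomial.coeff_add]; exact (hP I).add (hQ I)
      · rw [MvPolynomial.eval₂_add, ← heP x u, ← heQ x u]
  | mul _ _ ihf ihg =>
      obtain ⟨P, hP, heP⟩ := ihf
      obtain ⟨Q, hQ, heQ⟩ := ihg
      refine ⟨P * Q, fun I => ?_, fun x u => ?_⟩
      · rw [MvPolynomial.coeff_mul, Finset.sum_fn]
        exact ContDiff.sum fun (d : (Fin m →₀ ℕ) × (Fin m →₀ ℕ)) _ => (hP d.1).mul (hQ d.2)
      · rw [MvPolynomial.eval₂_mul, ← heP x u, ← heQ x u]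

lemma clm_eq_sum {n : ℕ} (L : (Fin n → ℝ) →L[ℝ] ℝ) (w : Fin n → ℝ) :
    L w = ∑ i, w i * L (Pi.single i 1) := by
  conv_lhs => rw [← Finset.univ_sum_single w]
  rw [map_sum]
  congr 1
  funext i
  have h : Pi.single i (w i) = w i • (Pi.single i (1:ℝ) : Fin n → ℝ) := by
    funext j
    by_cases hji : j = i <;> simp [Pi.single_apply, hji]
  rw [h, map_smul, smul_eq_mul]

lemma PA.deriv {n m : ℕ} (V : (Fin n → ℝ) × (Fin m → ℝ) → (Fin n → ℝ) × (Fin m → ℝ))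
    (hV1 : ∀ i, PA n m (fun p => (V p).1 i)) (hV2 : ∀ j, PA n m (fun p => (V p).2 j))
    {f} (h : PA n m f) : PA n m (fun p => fderiv ℝ f p (V p)) := by
  induction h with
  | base g hg =>
      have key : (fun p => fderiv ℝ (fun q : (Fin n → ℝ) × (Fin m → ℝ) => g q.1) p (V p)) =
          fun p => ∑ i, (V p).1 i * fderiv ℝ g p.1 (Pi.single i 1) := by
        funext p
        have hd : fderiv ℝ (fun q : (Fin n → ℝ) × (Fin m → ℝ) => g q.1) p =
            (fderiv ℝ g p.1).comp (ContinuousLinearMap.fst ℝ _ _) :=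
          (((hg.differentiable (by simp)).differentiableAt.hasFDerivAt).comp p hasFDerivAt_fst).fderiv
        rw [hd]
        exact clm_eq_sum (fderiv ℝ g p.1) (V p).1
      rw [key]
      exact PA.sum _ _ fun i _ => PA.mul (hV1 i)
        (PA.base (fun x => fderiv ℝ g x (Pi.single i 1))
          ((hg.fderiv_right (by simp)).clm_apply contDiff_const))
  | coord j =>
      have key : (fun p => fderiv ℝ (fun q : (Fin n → ℝ) × (Fin m → ℝ) => q.2 j) p (V p)) =
          fun p => (V p).2 j := by
        funext p
        have hd : HasFDerivAt (fun q : (Fin n → ℝ) × (Fin m → ℝ) => q.2 j)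
            ((ContinuousLinearMap.proj j).comp
              (ContinuousLinearMap.snd ℝ (Fin n → ℝ) (Fin m → ℝ))) p :=
          ((ContinuousLinearMap.proj j).comp
            (ContinuousLinearMap.snd ℝ (Fin n → ℝ) (Fin m → ℝ))).hasFDerivAt
        rw [hd.fderiv]
        rfl
      rw [key]
      exact hV2 j
  | add hf hg ihf ihg =>
      rename_i f₀ g₀
      have key : (fun p => fderiv ℝ (fun q => f₀ q + g₀ q) p (V p)) =
          fun p => fderiv ℝ f₀ p (V p) + fderiv ℝ g₀ p (V p) := by
        funext p
        rw [fderiv_fun_add (hf.contDiff.differentiable (by simp)).differentiableAt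
          (hg.contDiff.differentiable (by simp)).differentiableAt]
        rfl
      rw [key]
      exact PA.add ihf ihg
  | mul hf hg ihf ihg =>
      rename_i f₀ g₀
      have key : (fun p => fderiv ℝ (fun q => f₀ q * g₀ q) p (V p)) =
          fun p => f₀ p * fderiv ℝ g₀ p (V p) + g₀ p * fderiv ℝ f₀ p (V p) := by
        funext p
        rw [fderiv_fun_mul (hf.contDiff.differentiable (by simp)).differentiableAt
          (hg.contDiff.differentiable (by simp)).differentiableAt]
        simp [smul_eq_mul]
      rw [key]
      exact PA.add (PA.mul hf ihg) (PA.mul hg ihf)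

/-- The coordinate projection `ℝⁿ × ℝᵐ →L ℝ` indexed by `Fin n ⊕ Fin m`. -/
noncomputable def projc {n m : ℕ} (c : Fin n ⊕ Fin m) : ((Fin n → ℝ) × (Fin m → ℝ)) →L[ℝ] ℝ :=
  Sum.elim
    (fun i => (ContinuousLinearMap.proj i).comp (ContinuousLinearMap.fst ℝ _ _))
    (fun j => (ContinuousLinearMap.proj j).comp (ContinuousLinearMap.snd ℝ _ _)) c

lemma projc_apply {n m : ℕ} (c : Fin n ⊕ Fin m) (p : (Fin n → ℝ) × (Fin m → ℝ)) :
    projc c p = Sum.elim p.1 p.2 c := by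
  cases c <;> rfl

lemma componentPA {n m : ℕ} {V : (Fin n → ℝ) × (Fin m → ℝ) → (Fin n → ℝ) × (Fin m → ℝ)}
    (hV : IsPartiallyAlgebraic n m V) (c : Fin n ⊕ Fin m) :
    PA n m (fun p => Sum.elim (V p).1 (V p).2 c) := by
  obtain ⟨-, k, hk⟩ := hV
  obtain ⟨P, -, hc, he⟩ := hk c
  have key : (fun p : (Fin n → ℝ) × (Fin m → ℝ) => Sum.elim (V p).1 (V p).2 c) =
      fun p => MvPolynomial.eval₂ (Pi.evalRingHom (fun _ : Fin n → ℝ => ℝ) p.1) p.2 P := by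
    funext p
    exact he p.1 p.2
  rw [key]
  exact PA.ofPoly P hc

/-- the Lie bracket of two partially algebraic vector fields on
`ℝⁿ × ℝᵐ` is again a partially algebraic vector field. -/
theorem stmt1 (n m : ℕ)
    (V W : (Fin n → ℝ) × (Fin m → ℝ) → (Fin n → ℝ) × (Fin m → ℝ))
    (hV : IsPartiallyAlgebraic n m V) (hW : IsPartiallyAlgebraic n m W) :
    IsPartiallyAlgebraic n m (vBracket V W) := by
  have hVs := hV.1
  have hWs := hW.1
  constructor
  · exact ((hWs.fderiv_right (by simp)).clm_apply hVs).sub ((hVs.fderiv_right (by simp)).clm_apply hWs)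
  · have hV1 : ∀ i, PA n m (fun p => (V p).1 i) := fun i => componentPA hV (Sum.inl i)
    have hV2 : ∀ j, PA n m (fun p => (V p).2 j) := fun j => componentPA hV (Sum.inr j)
    have hW1 : ∀ i, PA n m (fun p => (W p).1 i) := fun i => componentPA hW (Sum.inl i)
    have hW2 : ∀ j, PA n m (fun p => (W p).2 j) := fun j => componentPA hW (Sum.inr j)
    have pa : ∀ c : Fin n ⊕ Fin m,
        PA n m (fun p => Sum.elim ((vBracket V W) p).1 ((vBracket V W) p).2 c) := by
      intro c
      have hWc : PA n m (fun p => projc c (W p)) := by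
        have : (fun p => projc c (W p)) = fun p => Sum.elim (W p).1 (W p).2 c := by
          funext p; exact projc_apply c (W p)
        rw [this]; exact componentPA hW c
      have hVc : PA n m (fun p => projc c (V p)) := by
        have : (fun p => projc c (V p)) = fun p => Sum.elim (V p).1 (V p).2 c := by
          funext p; exact projc_apply c (V p)
        rw [this]; exact componentPA hV c
      have h1 := PA.deriv V hV1 hV2 hWc
      have h2 := PA.deriv W hW1 hW2 hVc
      have key : (fun p => Sum.elim ((vBracket V W) p).1 ((vBracket V W) p).2 c) =
          fun p => fderiv ℝ (fun q => projc c (W q)) p (V p) -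
            fderiv ℝ (fun q => projc c (V q)) p (W p) := by
        funext p
        have hdW : HasFDerivAt (fun q => projc c (W q)) ((projc c).comp (fderiv ℝ W p)) p :=
          ((projc c).hasFDerivAt).comp p ((hWs.differentiable (by simp)) p).hasFDerivAt
        have hdV : HasFDerivAt (fun q => projc c (V q)) ((projc c).comp (fderiv ℝ V p)) p :=
          ((projc c).hasFDerivAt).comp p ((hVs.differentiable (by simp)) p).hasFDerivAt
        rw [hdW.fderiv, hdV.fderiv]
        rw [← projc_apply c (vBracket V W p)]
        show projc c (fderiv ℝ W p (V p) - fderiv ℝ V p (W p)) = _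
        rw [map_sub]
        rfl
      rw [key]
      exact PA.sub h1 h2
    choose P hcP heP using fun c => PA.toPoly (pa c)
    classical
    refine ⟨Finset.univ.sup (fun c => (P c).totalDegree), fun c =>
      ⟨P c, Finset.le_sup (f := fun c => (P c).totalDegree) (Finset.mem_univ c), hcP c, fun x u => heP c x u⟩⟩
end

section
/- Let B be a topological space, ι a finite index type, F : ι → Set B a family of closed sets with ⋃_i F i = B, and A : ι → Set B a family of sets such that for each i, A i ⊆ F i and A i is open in the subspace topology of F i (i.e. A i = F i ∩ O i for some open O i ⊆ B). If ⋃_i A i is dense in B, then the set U = ⋃_i (A i ∩ interior (F i)) is open in B, dense in B, and contained in ⋃_i A i. -/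
/-- If `B` is covered by finitely many closed sets `F i`, each `A i ⊆ F i`
is open in the subspace topology of `F i`, and `⋃ i, A i` is dense in `B`, then
`U = ⋃ i, (A i ∩ interior (F i))` is open, dense, and contained in `⋃ i, A i`. -/
theorem stmt4 {B : Type*} [TopologicalSpace B] {ι : Type*} [Finite ι]
    (F A : ι → Set B) (hFclosed : ∀ i, IsClosed (F i))
    (hcover : (⋃ i, F i) = Set.univ)
    (hAF : ∀ i, A i ⊆ F i)
    (hAopen : ∀ i, ∃ O : Set B, IsOpen O ∧ A i = F i ∩ O)
    (hdense : Dense (⋃ i, A i)) :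
    IsOpen (⋃ i, A i ∩ interior (F i)) ∧ Dense (⋃ i, A i ∩ interior (F i)) ∧
      (⋃ i, A i ∩ interior (F i)) ⊆ ⋃ i, A i := by
  classical
  have := Fintype.ofFinite ι
  choose O hO hAO using hAopen
  have key : ∀ i, A i ∩ interior (F i) = O i ∩ interior (F i) := fun i =>
    Set.ext fun x => ⟨fun h => ⟨((hAO i) ▸ h.1).2, h.2⟩,
      fun h => ⟨(hAO i) ▸ ⟨interior_subset h.2, h.1⟩, h.2⟩⟩
  have hopen : IsOpen (⋃ i, A i ∩ interior (F i)) := by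
    rw [Set.iUnion_congr key]
    exact isOpen_iUnion fun i => (hO i).inter isOpen_interior
  have aux : ∀ n (t : Finset ι), t.card ≤ n → ∀ V : Set B, IsOpen V → V.Nonempty →
      (∀ j, j ∉ t → V ∩ F j = ∅) →
      (V ∩ ⋃ i, A i ∩ interior (F i)).Nonempty := by
    intro n
    induction n with
    | zero =>
      intro t ht V hVopen hVne hdisj
      obtain ⟨x, hx⟩ := hVne
      have hx' : x ∈ ⋃ i, F i := hcover ▸ Set.mem_univ x
      obtain ⟨j, hj⟩ := Set.mem_iUnion.1 hx'
      have htempty : t = ∅ := Finset.card_eq_zero.1 (Nat.le_zero.1 ht)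
      have : x ∈ V ∩ F j := ⟨hx, hj⟩
      rw [hdisj j (htempty ▸ Finset.notMem_empty j)] at this
      exact absurd this (Set.notMem_empty x)
    | succ n ih =>
      intro t ht V hVopen hVne hdisj
      obtain ⟨y, hyV, hyA⟩ := hdense.inter_open_nonempty V hVopen hVne
      obtain ⟨k, hk⟩ := Set.mem_iUnion.1 hyA
      have hyFk : y ∈ F k := hAF k hk
      have hkt : k ∈ t := by
        by_contra hkt
        have : y ∈ V ∩ F k := ⟨hyV, hyFk⟩
        rw [hdisj k hkt] at this
        exact absurd this (Set.notMem_empty y)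
      have hyOk : y ∈ O k := ((hAO k) ▸ hk).2
      by_cases hsub : V ∩ O k ⊆ F k
      · refine ⟨y, hyV, Set.mem_iUnion.2 ⟨k, hk, ?_⟩⟩
        exact interior_maximal hsub (hVopen.inter (hO k)) ⟨hyV, hyOk⟩
      · obtain ⟨z, hzVO, hzFk⟩ := Set.not_subset.1 hsub
        have hWopen : IsOpen ((V ∩ O k) \ F k) :=
          (hVopen.inter (hO k)).sdiff (hFclosed k)
        have hcard : (t.erase k).card ≤ n := by
          have := Finset.card_erase_of_mem hkt
          omega
        have hdisj' : ∀ j, j ∉ t.erase k → ((V ∩ O k) \ F k) ∩ F j = ∅ := by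
          intro j hj
          rcases Finset.mem_erase.not.1 hj |> not_and_or.1 with h | h
          · push_neg at h
            subst h
            ext x
            simp only [Set.mem_inter_iff, Set.mem_diff, Set.mem_empty_iff_false,
              iff_false]
            rintro ⟨⟨_, hx2⟩, hx3⟩
            exact hx2 hx3
          · have : ((V ∩ O k) \ F k) ∩ F j ⊆ V ∩ F j := fun x hx =>
              ⟨hx.1.1.1, hx.2⟩
            exact Set.subset_empty_iff.1 (hdisj j h ▸ this)
        obtain ⟨w, hwW, hwU⟩ := ih (t.erase k) hcard _ hWopen ⟨z, hzVO, hzFk⟩ hdisj'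
        exact ⟨w, hwW.1.1, hwU⟩
  refine ⟨hopen, ?_, Set.iUnion_mono fun i => Set.inter_subset_left⟩
  rw [dense_iff_inter_open]
  intro V hVopen hVne
  have := aux (Finset.univ : Finset ι).card Finset.univ le_rfl V hVopen hVne
    (fun j hj => absurd (Finset.mem_univ j) hj)
  exact this
end

section
/- Let Y be a topological space and let I : ℕ → Ideal C(Y, ℝ) be a monotone increasing sequence of ideals of the ring of continuous real-valued functions on Y. Then there exists an open dense subset U ⊆ Y such that every x ∈ U has an open neighborhood V with the following property: for every j, the restricted ideal I_j | V (the ideal of C(V, ℝ) generated by the restrictions to V of the elements of I_j) is trivial, i.e. equal either to the zero ideal or to all of C(V, ℝ); consequently the sequence of restricted ideals (I_j | V)_j is stationary on V. -/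
/-- The restriction ring homomorphism `C(Y, ℝ) →+* C(V, ℝ)` for a subset `V ⊆ Y`. -/
def restrictHom {Y : Type*} [TopologicalSpace Y] (V : Set Y) :
    C(Y, ℝ) →+* C(V, ℝ) where
  toFun f := f.restrict V
  map_one' := rfl
  map_mul' _ _ := rfl
  map_zero' := rfl
  map_add' _ _ := rfl

/-!
Let `k` be the first index such that `I k` does not vanish identically on a given nonempty
open set `W`, and pick `f ∈ I k` with `f x ≠ 0` for some `x ∈ W`. On `V = W ∩ {f ≠ 0}` the ideals
`I j` with `j < k` vanish, so their restrictions are zero, while for `j ≥ k` the restriction of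
`f ∈ I j` is a unit. So every nonempty open set contains a nonempty open set on which all
restricted ideals are trivial, and the union of all such open sets is open and dense.
A monotone sequence of ideals each equal to `⊥` or `⊤` is eventually constant.
-/

section

variable {Y : Type*} [TopologicalSpace Y]

theorem map_restrictHom_eq_bot {J : Ideal C(Y, ℝ)} {V : Set Y}
    (h : ∀ f ∈ J, ∀ x ∈ V, f x = 0) : J.map (restrictHom V) = ⊥ :=
  (Ideal.map_eq_bot_iff_le_ker _).mpr fun f hf ↦
    RingHom.mem_ker.mpr <| ContinuousMap.ext fun x ↦ h f hf x x.2

theorem map_restrictHom_eq_top {J : Ideal C(Y, ℝ)} {V : Set Y} {f : C(Y, ℝ)} (hf : f ∈ J)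
    (h : ∀ x ∈ V, f x ≠ 0) : J.map (restrictHom V) = ⊤ :=
  Ideal.eq_top_of_isUnit_mem _ (Ideal.mem_map_of_mem _ hf)
    ((ContinuousMap.isUnit_iff_forall_ne_zero _).mpr fun x ↦ h x x.2)

theorem exists_isOpen_subset_forall_map_restrictHom_eq_bot_or_top {I : ℕ → Ideal C(Y, ℝ)}
    (hI : Monotone I) {W : Set Y} (hW : IsOpen W) (hWne : W.Nonempty) :
    ∃ V ⊆ W, V.Nonempty ∧ IsOpen V ∧
      ∀ j, (I j).map (restrictHom V) = ⊥ ∨ (I j).map (restrictHom V) = ⊤ := by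
  classical
  by_cases hvan : ∀ j, ∀ f ∈ I j, ∀ x ∈ W, f x = 0
  · exact ⟨W, subset_rfl, hWne, hW, fun j ↦ .inl (map_restrictHom_eq_bot (hvan j))⟩
  push Not at hvan
  obtain ⟨f, hfI, x, hxW, hfx⟩ := Nat.find_spec hvan
  have hfV : ∀ y ∈ W ∩ f ⁻¹' {0}ᶜ, f y ≠ 0 := fun y hy ↦ hy.2
  refine ⟨W ∩ f ⁻¹' {0}ᶜ, Set.inter_subset_left, ⟨x, hxW, hfx⟩,
    hW.inter (isOpen_compl_singleton.preimage f.continuous), fun j ↦ ?_⟩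
  rcases lt_or_ge j (Nat.find hvan) with hj | hj
  · have hvanj := Nat.find_min hvan hj
    push Not at hvanj
    exact .inl (map_restrictHom_eq_bot fun g hg y hy ↦ hvanj g hg y hy.1)
  · exact .inr (map_restrictHom_eq_top (hI hj hfI) hfV)

end

theorem dense_sUnion_of_forall_exists_subset {X : Type*} [TopologicalSpace X] {P : Set X → Prop}
    (h : ∀ W, IsOpen W → W.Nonempty → ∃ V ⊆ W, V.Nonempty ∧ IsOpen V ∧ P V) :
    Dense (⋃₀ {V | IsOpen V ∧ P V}) := by
  refine dense_iff_inter_open.mpr fun W hW hWne ↦ ?_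
  obtain ⟨V, hVW, ⟨x, hx⟩, hV, hPV⟩ := h W hW hWne
  exact ⟨x, hVW hx, V, ⟨hV, hPV⟩, hx⟩

theorem Monotone.exists_forall_ge_eq_of_eq_bot_or_top {α : Type*} [PartialOrder α]
    [BoundedOrder α] {M : ℕ → α} (hM : Monotone M) (h : ∀ j, M j = ⊥ ∨ M j = ⊤) :
    ∃ j₀, ∀ j, j₀ ≤ j → M j = M j₀ := by
  by_cases htop : ∃ j, M j = ⊤
  · obtain ⟨j₀, hj₀⟩ := htop
    exact ⟨j₀, fun j hj ↦ hj₀ ▸ top_unique (hj₀ ▸ hM hj)⟩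
  · push Not at htop
    exact ⟨0, fun j _ ↦ ((h j).resolve_right (htop j)).trans ((h 0).resolve_right (htop 0)).symm⟩

/-- for a monotone increasing sequence `I : ℕ → Ideal C(Y, ℝ)` of ideals
of the ring of continuous functions on a topological space `Y`, there is an open dense
set `U ⊆ Y` such that each `x ∈ U` has an open neighborhood `V` on which every
restricted ideal `I j | V` is trivial (zero or everything); consequently the sequence
of restricted ideals is stationary on `V`. -/
theorem stmt8 {Y : Type*} [TopologicalSpace Y] (I : ℕ → Ideal C(Y, ℝ))
    (hI : Monotone I) :
    ∃ U : Set Y, IsOpen U ∧ Dense U ∧ ∀ x ∈ U, ∃ V : Set Y, IsOpen V ∧ x ∈ V ∧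
      (∀ j : ℕ, Ideal.map (restrictHom V) (I j) = ⊥ ∨
        Ideal.map (restrictHom V) (I j) = ⊤) ∧
      ∃ j₀ : ℕ, ∀ j : ℕ, j₀ ≤ j →
        Ideal.map (restrictHom V) (I j) = Ideal.map (restrictHom V) (I j₀) := by
  refine ⟨⋃₀ {V | IsOpen V ∧ ∀ j, (I j).map (restrictHom V) = ⊥ ∨ (I j).map (restrictHom V) = ⊤},
    isOpen_sUnion fun V hV ↦ hV.1,
    dense_sUnion_of_forall_exists_subset fun W hW hWne ↦
      exists_isOpen_subset_forall_map_restrictHom_eq_bot_or_top hI hW hWne, ?_⟩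
  rintro x ⟨V, ⟨hV, htriv⟩, hxV⟩
  exact ⟨V, hV, hxV, htriv, Monotone.exists_forall_ge_eq_of_eq_bot_or_top
    (fun _ _ hjk ↦ Ideal.map_mono (hI hjk)) htriv⟩
end

section
/- Let Y be a topological space, m, l natural numbers, A = MvPolynomial (Fin m) C(Y, ℝ), and let 𝔞 be an A-submodule of A^l (functions Fin l → A). Then there exists an open dense subset U ⊆ Y such that every x ∈ U has an open neighborhood V for which the submodule of (MvPolynomial (Fin m) C(V, ℝ))^l generated by the componentwise images of the elements of 𝔞 under the coefficientwise restriction homomorphism is a finitely generated module over MvPolynomial (Fin m) C(V, ℝ). -/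
open MvPolynomial

section VectorPolynomials

variable {σ ι R S : Type*} [CommRing R] [CommRing S]

namespace MvPolynomial

noncomputable def vecMap (φ : R →+* S) :
    (ι → MvPolynomial σ R) →ₛₗ[map (σ := σ) φ] (ι → MvPolynomial σ S) where
  toFun u i := map φ (u i)
  map_add' _ _ := by ext1; exact map_add _ _ _
  map_smul' _ _ := by ext1; exact map_mul _ _ _

@[simp]
lemma vecMap_apply (φ : R →+* S) (u : ι → MvPolynomial σ R) (i : ι) :
    vecMap φ u i = map φ (u i) := rfl

lemma vecMap_vecMap {T : Type*} [CommRing T] (φ : R →+* S) (ψ : S →+* T)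
    (u : ι → MvPolynomial σ R) : vecMap ψ (vecMap φ u) = vecMap (ψ.comp φ) u :=
  _root_.funext fun _ => map_map _ _ _

end MvPolynomial

instance Pi.wellFoundedGT {α : ι → Type*} [Finite ι] [∀ i, Preorder (α i)]
    [∀ i, WellFoundedGT (α i)] : WellFoundedGT (∀ i, α i) :=
  ⟨(Pi.wellFoundedLT (α := fun i => (α i)ᵒᵈ)).wf⟩

namespace MonomialOrder

variable (ord : MonomialOrder σ)

noncomputable def potKey (i : ι) (α : σ →₀ ℕ) : ι ×ₗ ord.syn := toLex (i, ord.toSyn α)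

variable {ord}

lemma potKey_inj {i j : ι} {α β : σ →₀ ℕ} :
    ord.potKey i α = ord.potKey j β ↔ i = j ∧ α = β := by
  simp [potKey]

lemma exists_potKey_eq (k : ι ×ₗ ord.syn) : ∃ i α, ord.potKey i α = k :=
  ⟨(ofLex k).1, ord.toSyn.symm (ofLex k).2, by simp [potKey]⟩

variable [LinearOrder ι]

lemma potKey_add_le_potKey_add {i j : ι} {α β : σ →₀ ℕ} (h : ord.potKey j β ≤ ord.potKey i α)
    (γ : σ →₀ ℕ) : ord.potKey j (γ + β) ≤ ord.potKey i (γ + α) := by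
  simp only [potKey, Prod.Lex.toLex_le_toLex, map_add] at h ⊢
  exact h.imp_right fun h => ⟨h.1, add_le_add_right h.2 _⟩

variable [Fintype ι]

variable (ord) in
noncomputable def leadKey (u : ι → MvPolynomial σ R) : WithBot (ι ×ₗ ord.syn) :=
  (Finset.univ.biUnion fun i => (u i).support.image (ord.potKey i)).max

lemma potKey_le_leadKey {u : ι → MvPolynomial σ R} {i : ι} {α : σ →₀ ℕ}
    (h : (u i).coeff α ≠ 0) : ↑(ord.potKey i α) ≤ ord.leadKey u :=
  Finset.le_max <| Finset.mem_biUnion.2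
    ⟨i, Finset.mem_univ _, Finset.mem_image_of_mem _ (mem_support_iff.2 h)⟩

lemma leadKey_le_iff {u : ι → MvPolynomial σ R} {b : WithBot (ι ×ₗ ord.syn)} :
    ord.leadKey u ≤ b ↔ ∀ i α, (u i).coeff α ≠ 0 → ↑(ord.potKey i α) ≤ b := by
  simp only [leadKey, Finset.max_le_iff, Finset.mem_biUnion, Finset.mem_univ, true_and,
    Finset.mem_image, mem_support_iff]
  exact ⟨fun h i α hα => h _ ⟨i, α, hα, rfl⟩, fun h _ ⟨i, α, hα, hk⟩ => hk ▸ h i α hα⟩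

lemma coeff_ne_zero_of_leadKey_eq {u : ι → MvPolynomial σ R} {i : ι} {α : σ →₀ ℕ}
    (h : ord.leadKey u = ord.potKey i α) : (u i).coeff α ≠ 0 := by
  obtain ⟨j, -, hj⟩ := Finset.mem_biUnion.1 (Finset.mem_of_max h)
  obtain ⟨β, hβ, hkey⟩ := Finset.mem_image.1 hj
  obtain ⟨rfl, rfl⟩ := potKey_inj.1 hkey
  exact mem_support_iff.1 hβ

lemma eq_zero_of_leadKey_eq_bot {u : ι → MvPolynomial σ R} (h : ord.leadKey u = ⊥) : u = 0 := by
  ext i α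
  by_contra hα
  exact (WithBot.bot_lt_coe _).not_ge (h ▸ potKey_le_leadKey hα)

lemma leadKey_sub_lt {u v : ι → MvPolynomial σ R} {i : ι} {α : σ →₀ ℕ}
    (hu : ord.leadKey u ≤ ord.potKey i α) (hv : ord.leadKey v ≤ ord.potKey i α)
    (h : (u i).coeff α = (v i).coeff α) : ord.leadKey (u - v) < ord.potKey i α := by
  refine lt_of_le_of_ne (leadKey_le_iff.2 fun j β hβ => ?_) fun heq => ?_
  · simp only [Pi.sub_apply, coeff_sub] at hβ
    by_cases hu' : (u j).coeff β = 0
    · exact leadKey_le_iff.1 hv j β (by simpa [hu'] using hβ)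
    · exact leadKey_le_iff.1 hu j β hu'
  · simpa [h] using coeff_ne_zero_of_leadKey_eq heq

lemma leadKey_C_smul_le (a : R) (u : ι → MvPolynomial σ R) :
    ord.leadKey ((C a : MvPolynomial σ R) • u) ≤ ord.leadKey u :=
  leadKey_le_iff.2 fun i α h => potKey_le_leadKey (right_ne_zero_of_mul (by simpa using h))

lemma leadKey_monomial_smul {u : ι → MvPolynomial σ R} {i : ι} {α : σ →₀ ℕ}
    (h : ord.leadKey u = ord.potKey i α) (γ : σ →₀ ℕ) :
    ord.leadKey (monomial γ (1 : R) • u) = ord.potKey i (γ + α) := by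
  refine le_antisymm (leadKey_le_iff.2 fun j β hβ => ?_) (potKey_le_leadKey ?_)
  · simp only [Pi.smul_apply, smul_eq_mul, coeff_monomial_mul', one_mul] at hβ
    split_ifs at hβ with hγβ
    · have := potKey_add_le_potKey_add (WithBot.coe_le_coe.1 (h ▸ potKey_le_leadKey hβ)) γ
      rw [add_tsub_cancel_of_le hγβ] at this
      exact WithBot.coe_le_coe.2 this
    · exact absurd rfl hβ
  · simpa [coeff_monomial_mul] using coeff_ne_zero_of_leadKey_eq h

lemma leadKey_vecMap {φ : R →+* S} {u : ι → MvPolynomial σ R} {i : ι} {α : σ →₀ ℕ}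
    (h : ord.leadKey u = ord.potKey i α) (hφ : φ ((u i).coeff α) ≠ 0) :
    ord.leadKey (vecMap φ u) = ord.potKey i α := by
  refine le_antisymm (leadKey_le_iff.2 fun j β hβ => h ▸ potKey_le_leadKey ?_)
    (potKey_le_leadKey (by simpa [coeff_map] using hφ))
  contrapose! hβ
  simp [coeff_map, hβ]

variable (ord) in
def leadingIdeal (N : Submodule (MvPolynomial σ R) (ι → MvPolynomial σ R)) (i : ι) :
    AddSemigroupIdeal (σ →₀ ℕ) where
  carrier := {α | ∃ w ∈ N, ord.leadKey w = ord.potKey i α ∧ IsUnit ((w i).coeff α)}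
  vadd_mem' γ α := by
    rintro ⟨w, hwN, hw, hunit⟩
    refine ⟨monomial γ (1 : R) • w, N.smul_mem _ hwN, leadKey_monomial_smul hw γ, ?_⟩
    simpa [coeff_monomial_mul] using hunit

theorem le_of_forall_leadKey_eq_mem_leadingIdeal
    {M N : Submodule (MvPolynomial σ R) (ι → MvPolynomial σ R)} (hNM : N ≤ M)
    (h : ∀ u ∈ M, ∀ i α, ord.leadKey u = ord.potKey i α → α ∈ ord.leadingIdeal N i) :
    M ≤ N := by
  suffices ∀ k, ∀ u ∈ M, ord.leadKey u = k → u ∈ N from fun u hu => this _ u hu rfl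
  intro k
  induction k using WellFoundedLT.induction with
  | _ k IH =>
  rintro u hu rfl
  cases hk : ord.leadKey u with
  | bot => simp [eq_zero_of_leadKey_eq_bot hk]
  | coe k =>
    obtain ⟨i, α, rfl⟩ := exists_potKey_eq k
    obtain ⟨w, hwN, hw, b, hb⟩ := h u hu i α hk
    set v := (C ((u i).coeff α * ↑b⁻¹) : MvPolynomial σ R) • w
    have hv : v ∈ N := N.smul_mem _ hwN
    have hlt : ord.leadKey (u - v) < ord.potKey i α :=
      leadKey_sub_lt hk.le (hw ▸ leadKey_C_smul_le _ _) <| by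
        simp only [v, Pi.smul_apply, smul_eq_mul, coeff_C_mul, ← hb, Units.inv_mul_cancel_right]
    have := IH _ (hk ▸ hlt) (u - v) (M.sub_mem hu (hNM hv)) rfl
    simpa using N.add_mem this hv

theorem fg_of_forall_leadKey_eq_mem_leadingIdeal [Finite σ]
    (M : Submodule (MvPolynomial σ R) (ι → MvPolynomial σ R))
    (h : ∀ u ∈ M, ∀ i α, ord.leadKey u = ord.potKey i α → α ∈ ord.leadingIdeal M i) :
    M.FG := by
  choose G hG using fun i =>
    AddSemigroupIdeal.fg_iff.1 (AddSemigroupIdeal.fg_of_wellQuasiOrderedLE (ord.leadingIdeal M i))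
  have hGM : ∀ i, ∀ α ∈ G i, α ∈ ord.leadingIdeal M i := fun i α hα =>
    hG i ▸ AddSemigroupIdeal.subset_closure hα
  choose w hwM hw using hGM
  set N := Submodule.span (MvPolynomial σ R)
    (Set.range fun x : Σ i, G i => w x.1 x.2 x.2.2)
  have hNM : N ≤ M := Submodule.span_le.2 <| Set.range_subset_iff.2 fun x => hwM _ _ _
  have hMN : ∀ i, ord.leadingIdeal M i ≤ ord.leadingIdeal N i := fun i => by
    rw [hG i, AddSemigroupIdeal.closure_le]
    exact fun α hα => ⟨w i α hα, Submodule.subset_span ⟨⟨i, α, hα⟩, rfl⟩, hw i α hα⟩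
  have : M = N := le_antisymm
    (le_of_forall_leadKey_eq_mem_leadingIdeal hNM fun u hu i α hk => hMN i (h u hu i α hk)) hNM
  exact this ▸ Submodule.fg_span (Set.finite_range _)

lemma leadingIdeal_le_of_vecMap_image_subset [Nontrivial S] (φ : R →+* S)
    {M : Submodule (MvPolynomial σ R) (ι → MvPolynomial σ R)}
    {M' : Submodule (MvPolynomial σ S) (ι → MvPolynomial σ S)}
    (hM : vecMap φ '' M ⊆ (M' : Set (ι → MvPolynomial σ S))) :
    ord.leadingIdeal M ≤ ord.leadingIdeal M' := fun i _ ⟨w, hwM, hw, hunit⟩ =>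
  ⟨vecMap φ w, hM ⟨w, hwM, rfl⟩, leadKey_vecMap hw (hunit.map φ).ne_zero,
    by simpa [coeff_map] using hunit.map φ⟩

end MonomialOrder

section Restriction

variable {Y : Type*} [TopologicalSpace Y]

def restrictSubsetHom {V' V : Set Y} (h : V' ⊆ V) : C(V, ℝ) →+* C(V', ℝ) :=
  (ContinuousMap.compRightAlgHom ℝ ℝ (ContinuousMap.inclusion h)).toRingHom

lemma restrictSubsetHom_comp_restrictHom {V' V : Set Y} (h : V' ⊆ V) :
    (restrictSubsetHom h).comp (restrictHom V) = restrictHom V' := rfl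

lemma exists_isUnit_restrictSubsetHom {V : Set Y} (hV : IsOpen V) {c : C(V, ℝ)} (hc : c ≠ 0) :
    ∃ V', ∃ h : V' ⊆ V, IsOpen V' ∧ V'.Nonempty ∧ IsUnit (restrictSubsetHom h c) := by
  obtain ⟨y, hy⟩ : ∃ y, c y ≠ 0 := by
    contrapose! hc
    exact ContinuousMap.ext hc
  refine ⟨Subtype.val '' {y | c y ≠ 0}, Subtype.coe_image_subset _ _,
    hV.isOpenMap_subtype_val _ (isOpen_ne_fun c.continuous continuous_const), ⟨y, y, hy, rfl⟩, ?_⟩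
  rw [ContinuousMap.isUnit_iff_forall_ne_zero]
  rintro ⟨_, y, hy, rfl⟩
  exact hy

noncomputable def restrictSpan
    (𝔞 : Submodule (MvPolynomial σ C(Y, ℝ)) (ι → MvPolynomial σ C(Y, ℝ))) (V : Set Y) :
    Submodule (MvPolynomial σ C(V, ℝ)) (ι → MvPolynomial σ C(V, ℝ)) :=
  Submodule.span _ (vecMap (restrictHom V) '' 𝔞)

lemma vecMap_image_restrictSpan_subset
    (𝔞 : Submodule (MvPolynomial σ C(Y, ℝ)) (ι → MvPolynomial σ C(Y, ℝ))) {V' V : Set Y}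
    (h : V' ⊆ V) : vecMap (restrictSubsetHom h) '' restrictSpan 𝔞 V ⊆
      (restrictSpan 𝔞 V' : Set (ι → MvPolynomial σ C(V', ℝ))) := by
  refine (Submodule.image_span_subset_span _ _).trans (Submodule.span_mono ?_)
  rw [Set.image_image]
  simp only [vecMap_vecMap, restrictSubsetHom_comp_restrictHom]
  rfl

variable {𝔞 : Submodule (MvPolynomial σ C(Y, ℝ)) (ι → MvPolynomial σ C(Y, ℝ))}

lemma MonomialOrder.exists_mem_leadingIdeal_restrictSpan [Fintype ι] [LinearOrder ι]
    {ord : MonomialOrder σ} {V : Set Y} (hV : IsOpen V) {u : ι → MvPolynomial σ C(V, ℝ)}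
    (hu : u ∈ restrictSpan 𝔞 V) {i : ι} {α : σ →₀ ℕ} (h : ord.leadKey u = ord.potKey i α) :
    ∃ V' ⊆ V, IsOpen V' ∧ V'.Nonempty ∧ α ∈ ord.leadingIdeal (restrictSpan 𝔞 V') i := by
  obtain ⟨V', hV'V, hV', hV'ne, hunit⟩ :=
    exists_isUnit_restrictSubsetHom hV (coeff_ne_zero_of_leadKey_eq h)
  have := hV'ne.to_subtype
  exact ⟨V', hV'V, hV', hV'ne, vecMap _ u, vecMap_image_restrictSpan_subset 𝔞 hV'V ⟨u, hu, rfl⟩,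
    leadKey_vecMap h hunit.ne_zero, by simpa [coeff_map] using hunit⟩

theorem exists_fg_restrictSpan [Finite σ] [Finite ι] {W : Set Y} (hW : IsOpen W)
    (hWne : W.Nonempty) : ∃ V ⊆ W, IsOpen V ∧ V.Nonempty ∧ (restrictSpan 𝔞 V).FG := by
  classical
  cases nonempty_fintype ι
  let : LinearOrder ι := linearOrderOfSTO WellOrderingRel
  let : LinearOrder σ := linearOrderOfSTO WellOrderingRel
  let ord : MonomialOrder σ := .lex
  obtain ⟨_, ⟨V, hVW, hV, hVne, rfl⟩, hmax⟩ := exists_maximal_of_wellFoundedGT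
    (fun I => ∃ V ⊆ W, IsOpen V ∧ V.Nonempty ∧ ord.leadingIdeal (restrictSpan 𝔞 V) = I)
    ⟨_, W, subset_rfl, hW, hWne, rfl⟩
  refine ⟨V, hVW, hV, hVne, ord.fg_of_forall_leadKey_eq_mem_leadingIdeal _ fun u hu i α h => ?_⟩
  obtain ⟨V', hV'V, hV', hV'ne, hα⟩ := ord.exists_mem_leadingIdeal_restrictSpan hV hu h
  have := hV'ne.to_subtype
  exact hmax ⟨V', hV'V.trans hVW, hV', hV'ne, rfl⟩
    (ord.leadingIdeal_le_of_vecMap_image_subset _ (vecMap_image_restrictSpan_subset 𝔞 hV'V)) i hα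

end Restriction

end VectorPolynomials

/-- semi-Noetherian property for submodules: let
`A = MvPolynomial (Fin m) C(Y, ℝ)` and let `𝔞` be an `A`-submodule of `A^l`. Then
there is an open dense set `U ⊆ Y` such that every `x ∈ U` has an open neighborhood
`V` for which the submodule of `(MvPolynomial (Fin m) C(V, ℝ))^l` generated by the
componentwise images of elements of `𝔞` under coefficientwise restriction is a
finitely generated module over `MvPolynomial (Fin m) C(V, ℝ)`. -/
theorem stmt10 {Y : Type*} [TopologicalSpace Y] (m l : ℕ)
    (𝔞 : Submodule (MvPolynomial (Fin m) C(Y, ℝ))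
      (Fin l → MvPolynomial (Fin m) C(Y, ℝ))) :
    ∃ U : Set Y, IsOpen U ∧ Dense U ∧ ∀ x ∈ U, ∃ V : Set Y, IsOpen V ∧ x ∈ V ∧
      (Submodule.span (MvPolynomial (Fin m) C(V, ℝ))
        ((fun (v : Fin l → MvPolynomial (Fin m) C(Y, ℝ)) (i : Fin l) =>
            MvPolynomial.map (σ := Fin m) (restrictHom V) (v i)) ''
          (𝔞 : Set (Fin l → MvPolynomial (Fin m) C(Y, ℝ))))).FG := by
  refine ⟨⋃₀ {V | IsOpen V ∧ (restrictSpan 𝔞 V).FG}, isOpen_sUnion fun V hV => hV.1, ?_, ?_⟩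
  · refine dense_iff_inter_open.2 fun W hW hWne => ?_
    obtain ⟨V, hVW, hV, ⟨x, hx⟩, hfg⟩ := exists_fg_restrictSpan (𝔞 := 𝔞) hW hWne
    exact ⟨x, hVW hx, V, ⟨hV, hfg⟩, hx⟩
  · rintro x ⟨V, ⟨hV, hfg⟩, hxV⟩
    exact ⟨V, hV, hxV, hfg⟩
end

section
/- Let a : ℝ → Matrix (Fin l) (Fin l) ℝ be continuous and let V₁, …, V_l : ℝ → ℝⁿ be differentiable curves such that for every i and every t ∈ ℝ, the derivative of V_i at t equals Σ_j a(t) i j • V_j(t) (i.e. HasDerivAt (V i) (Σ_j a t i j • V j t) t). Then the linear span of {V₁(t), …, V_l(t)} in ℝⁿ, as a submodule of ℝⁿ, is independent of t: for all s, t ∈ ℝ, Submodule.span ℝ {V₁(s), …, V_l(s)} = Submodule.span ℝ {V₁(t), …, V_l(t)}. -/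
/-!
If a functional `φ` vanishes on the span of the `V i s`, then `u r = (φ (V i r))ᵢ` solves the
linear ODE `u' = a r *ᵥ u` with `u s = 0`, so `u` vanishes identically by uniqueness of solutions.
Hence every `V i t` lies in the span of the `V j s`, and the reverse inclusion is symmetric.
-/

open Set Topology Matrix

/-- The zero set of `u` is closed, and open by local uniqueness: near any time, `A` is bounded,
so the ODE is Lipschitz there. -/
theorem eq_zero_of_hasDerivAt_clm_apply {E : Type*} [NormedAddCommGroup E] [NormedSpace ℝ E]
    {A : ℝ → E →L[ℝ] E} (hA : Continuous A) {u : ℝ → E}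
    (hu : ∀ r, HasDerivAt u (A r (u r)) r) {s : ℝ} (hs : u s = 0) : u = 0 := by
  suffices IsClopen {r | u r = 0} by
    simpa [Set.eq_univ_iff_forall, funext_iff] using this.eq_univ ⟨s, hs⟩
  refine ⟨isClosed_eq (continuous_iff_continuousAt.2 fun r => (hu r).continuousAt)
    continuous_const, isOpen_iff_mem_nhds.2 fun r₀ (hr₀ : u r₀ = 0) => ?_⟩
  have hlip : ∀ᶠ r in 𝓝 r₀, LipschitzOnWith (‖A r₀‖₊ + 1) (A r) univ :=
    (hA.nnnorm.continuousAt.eventually_lt continuousAt_const (lt_add_one _)).mono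
      fun r hr => ((A r).lipschitz.weaken hr.le).lipschitzOnWith
  exact ODE_solution_unique_of_eventually hlip (.of_forall fun r => ⟨hu r, mem_univ _⟩)
    (.of_forall fun r => ⟨by simpa using hasDerivAt_const r (0 : E), mem_univ _⟩) hr₀

section

variable {ι E : Type*} [Fintype ι] [NormedAddCommGroup E] [NormedSpace ℝ E]
  {a : ℝ → Matrix ι ι ℝ} {V : ι → ℝ → E}

theorem hasDerivAt_apply_mulVec (φ : E →L[ℝ] ℝ) {t : ℝ}
    (hV : ∀ i, HasDerivAt (V i) (∑ j, a t i j • V j t) t) :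
    HasDerivAt (fun r i => φ (V i r)) (a t *ᵥ fun i => φ (V i t)) t := by
  refine hasDerivAt_pi.2 fun i => ?_
  simpa [mulVec, dotProduct, Function.comp_def] using φ.hasFDerivAt.comp_hasDerivAt t (hV i)

theorem continuous_toContinuousLinearMap_toLin' [DecidableEq ι] (ha : Continuous a) :
    Continuous fun t => LinearMap.toContinuousLinearMap (toLin' (a t)) :=
  ((LinearMap.toContinuousLinearMap : ((ι → ℝ) →ₗ[ℝ] ι → ℝ) ≃ₗ[ℝ] _).toLinearMap ∘ₗ
    toLin'.toLinearMap).continuous_of_finiteDimensional.comp ha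

theorem span_range_le_of_hasDerivAt_sum_smul [FiniteDimensional ℝ E] (ha : Continuous a)
    (hV : ∀ i t, HasDerivAt (V i) (∑ j, a t i j • V j t) t) (s t : ℝ) :
    Submodule.span ℝ (range fun i => V i t) ≤ Submodule.span ℝ (range fun i => V i s) := by
  classical
  rw [Submodule.span_le]
  rintro _ ⟨i, rfl⟩
  rw [SetLike.mem_coe, ← Subspace.forall_mem_dualAnnihilator_apply_eq_zero_iff]
  intro φ hφ
  have hus : (fun j => φ (V j s)) = 0 :=
    funext fun j => (Submodule.mem_dualAnnihilator φ).1 hφ _ (Submodule.subset_span ⟨j, rfl⟩)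
  have hu : (fun r j => φ (V j r)) = 0 :=
    eq_zero_of_hasDerivAt_clm_apply (continuous_toContinuousLinearMap_toLin' ha) (fun r => by
      simpa using hasDerivAt_apply_mulVec (LinearMap.toContinuousLinearMap φ) (hV · r)) hus
  exact congrFun (congrFun hu t) i

end

/-- if curves `V 1, …, V l : ℝ → ℝⁿ` satisfy the linear differential
relation `∂V_i/∂t = Σ_j a t i j • V j t` with continuous coefficient matrix `a t`,
then the linear span of `{V 1 t, …, V l t}` in `ℝⁿ` is independent of `t`. -/
theorem stmt11 {l n : ℕ} (a : ℝ → Matrix (Fin l) (Fin l) ℝ) (ha : Continuous a)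
    (V : Fin l → ℝ → (Fin n → ℝ))
    (hV : ∀ (i : Fin l) (t : ℝ), HasDerivAt (V i) (∑ j, a t i j • V j t) t)
    (s t : ℝ) :
    Submodule.span ℝ (Set.range fun i => V i s) =
      Submodule.span ℝ (Set.range fun i => V i t) :=
  le_antisymm (span_range_le_of_hasDerivAt_sum_smul ha hV t s)
    (span_range_le_of_hasDerivAt_sum_smul ha hV s t)
end

section
/- Let A : ℝ → Matrix (Fin k) (Fin k) ℝ be continuous and let X : ℝ → Matrix (Fin k) (Fin n) ℝ be differentiable with HasDerivAt X (A t * X t) t for every t ∈ ℝ. Then the rank of the matrix X(t) is independent of t: for all s, t ∈ ℝ, (X s).rank = (X t).rank. -/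
/-!
For a fixed vector `c`, the curve `t ↦ X t *ᵥ c` solves the linear ODE `x' = A(t) x`. A continuous
coefficient is locally bounded, so this ODE is locally Lipschitz and, by local uniqueness, the set
where two solutions agree is open; it is also closed, hence (ℝ being connected) empty or all of ℝ.
Comparing with the zero solution, the kernel of `X t` does not depend on `t`, and neither does the
rank, by rank–nullity.
-/

attribute [local instance] Matrix.normedAddCommGroup Matrix.normedSpace

open Set Filter Topology Matrix

theorem linear_ODE_solution_unique {E : Type*} [NormedAddCommGroup E] [NormedSpace ℝ E]
    {A : ℝ → E →L[ℝ] E} (hA : Continuous A) {f g : ℝ → E}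
    (hf : ∀ t, HasDerivAt f (A t (f t)) t) (hg : ∀ t, HasDerivAt g (A t (g t)) t)
    {t₀ : ℝ} (heq : f t₀ = g t₀) : f = g := by
  have locally : ∀ t₁, f t₁ = g t₁ → f =ᶠ[𝓝 t₁] g := fun t₁ h ↦ by
    have hK : ∀ᶠ t in 𝓝 t₁, LipschitzOnWith (‖A t₁‖₊ + 1) (A t) univ :=
      (hA.nnnorm.continuousAt.eventually (gt_mem_nhds (lt_add_one _))).mono fun t ht ↦
        ((A t).lipschitz.weaken ht.le).lipschitzOnWith
    exact ODE_solution_unique_of_eventually hK (.of_forall fun t ↦ ⟨hf t, trivial⟩)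
      (.of_forall fun t ↦ ⟨hg t, trivial⟩) h
  have hclopen : IsClopen {t | f t = g t} :=
    ⟨isClosed_eq (continuous_iff_continuousAt.2 fun t ↦ (hf t).continuousAt)
      (continuous_iff_continuousAt.2 fun t ↦ (hg t).continuousAt),
      isOpen_iff_mem_nhds.2 locally⟩
  exact funext (eq_univ_iff_forall.1 (hclopen.eq_univ ⟨t₀, heq⟩))

theorem Matrix.ker_mulVecLin_eq_of_hasDerivAt {m n : Type*} [Fintype m] [Fintype n]
    {A : ℝ → Matrix m m ℝ} (hA : Continuous A) {X : ℝ → Matrix m n ℝ}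
    (hX : ∀ t, HasDerivAt X (A t * X t) t) (s t : ℝ) :
    LinearMap.ker (X s).mulVecLin = LinearMap.ker (X t).mulVecLin := by
  suffices h : ∀ s t, LinearMap.ker (X s).mulVecLin ≤ LinearMap.ker (X t).mulVecLin from
    (h s t).antisymm (h t s)
  intro s t c hc
  let Acl : ℝ → (m → ℝ) →L[ℝ] (m → ℝ) := fun t ↦ LinearMap.toContinuousLinearMap (A t).mulVecLin
  have hAcl : Continuous Acl := continuous_clm_apply.2 fun _ ↦ hA.matrix_mulVec continuous_const
  let applyTo : Matrix m n ℝ →L[ℝ] (m → ℝ) :=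
    LinearMap.toContinuousLinearMap ((mulVecBilin ℝ ℝ).flip c)
  have hsol : ∀ t, HasDerivAt (fun t ↦ X t *ᵥ c) (Acl t (X t *ᵥ c)) t := fun t ↦ by
    have h := applyTo.hasFDerivAt.comp_hasDerivAt t (hX t)
    show HasDerivAt _ (A t *ᵥ X t *ᵥ c) t
    rw [mulVec_mulVec]
    exact h
  have hzero : (fun t ↦ X t *ᵥ c) = 0 :=
    linear_ODE_solution_unique hAcl hsol (fun t ↦ by simp) (LinearMap.mem_ker.1 hc)
  exact LinearMap.mem_ker.2 (congrFun hzero t)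

theorem Matrix.rank_eq_of_ker_mulVecLin_eq {K m n : Type*} [Field K] [Fintype n]
    {M N : Matrix m n K} (h : LinearMap.ker M.mulVecLin = LinearMap.ker N.mulVecLin) :
    M.rank = N.rank := by
  have hM := LinearMap.finrank_range_add_finrank_ker M.mulVecLin
  have hN := LinearMap.finrank_range_add_finrank_ker N.mulVecLin
  rw [h] at hM
  unfold rank
  omega

/-- if `X : ℝ → Matrix (Fin k) (Fin n) ℝ` solves the linear matrix ODE
`X′(t) = A(t) * X(t)` with continuous coefficient matrix `A`, then the rank of `X t`
is independent of `t`. -/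
theorem stmt12 {k n : ℕ} (A : ℝ → Matrix (Fin k) (Fin k) ℝ) (hA : Continuous A)
    (X : ℝ → Matrix (Fin k) (Fin n) ℝ)
    (hX : ∀ t : ℝ, HasDerivAt X (A t * X t) t) (s t : ℝ) :
    (X s).rank = (X t).rank :=
  rank_eq_of_ker_mulVecLin_eq (ker_mulVecLin_eq_of_hasDerivAt hA hX s t)
end

section
/- Let M be a topological space and let r : M → M → Prop be an equivalence relation on M. Suppose U ⊆ M × M is an open dense subset such that r x y holds for every (x, y) ∈ U, and suppose there exists x₀ ∈ M whose equivalence class {y ∈ M | r x₀ y} is dense in M. Then the equivalence class {y ∈ M | r x₀ y} contains an open dense subset of M. (This is the topological core of Gromov's open–dense orbit theorem: if the pseudo-group of local isometries of a rigid structure has a dense orbit, it has an open dense orbit.) -/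
/-- topological core of Gromov's open–dense orbit theorem:
let `r` be an equivalence relation on a topological space `M`, let `U ⊆ M × M` be an
open dense set all of whose points `(x, y)` satisfy `r x y`, and suppose some point
`x₀` has a dense equivalence class. Then the equivalence class of `x₀` contains an
open dense subset of `M`. -/
theorem stmt13 {M : Type*} [TopologicalSpace M] (r : M → M → Prop)
    (hr : Equivalence r) (U : Set (M × M)) (hUopen : IsOpen U) (hUdense : Dense U)
    (hUr : ∀ p ∈ U, r p.1 p.2) (x₀ : M) (hx₀ : Dense {y | r x₀ y}) :
    ∃ W : Set M, W ⊆ {y | r x₀ y} ∧ IsOpen W ∧ Dense W := by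
  refine ⟨⋃ x ∈ {x | r x₀ x}, {y | (x, y) ∈ U}, ?_, ?_, ?_⟩
  · rintro y hy
    simp only [Set.mem_iUnion] at hy
    obtain ⟨x, hx, hxy⟩ := hy
    exact hr.trans hx (hUr _ hxy)
  · exact isOpen_biUnion fun x _ => hUopen.preimage (Continuous.prodMk_right x)
  · rw [dense_iff_inter_open]
    intro O hO hOne
    -- the set of x with some y ∈ O, (x,y) ∈ U is open and nonempty
    have hS : IsOpen (Prod.fst '' (U ∩ Set.univ ×ˢ O)) :=
      isOpenMap_fst _ (hUopen.inter (isOpen_univ.prod hO))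
    have hSne : (U ∩ Set.univ ×ˢ O).Nonempty := by
      rcases hOne with ⟨o, ho⟩
      rw [Set.inter_comm]
      exact hUdense.inter_open_nonempty _ (isOpen_univ.prod hO)
        ⟨(o, o), Set.mem_univ _, ho⟩
    have := hx₀.inter_open_nonempty _ hS (hSne.image _)
    obtain ⟨x, ⟨⟨a, b⟩, ⟨hab, -, hb⟩, rfl⟩, hx⟩ := this
    exact ⟨b, hb, Set.mem_iUnion₂.2 ⟨a, hx, hab⟩⟩
end
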